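/- The greedy algorithm for the $c$-dispersion problem returns a set $S_k$ of size $k$ with $cost_c(S_k) \geq cost_c(S^*)/(2c)$, where $S^*$ is an optimal $k$-subset. Formally: define $S_{c+1}$ as a $(c+1)$-subset of $P$ maximizing $cost_c$, and for $j = c+2, \ldots, k$ define $S_j = S_{j-1} \cup \{p\}$ where $p \in P \setminus S_{j-1}$ maximizes $cost_c(S_{j-1} \cup \{p\})$. Then for every $i$ with $c+1 \leq i \leq k$, $cost_c(S_i) \geq cost_c(S^*)/(2c)$. -/
import Mathlib


open Finset

/-- `costP c p S`: the sum of the `c` smallest distances from `p` to points of `S \ {p}`,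
expressed as the infimum over all `c`-element subsets of `S.erase p` of the sum of distances. -/
noncomputable def costP {X : Type*} [MetricSpace X] [DecidableEq X]
    (c : ℕ) (p : X) (S : Finset X) : ℝ :=
  sInf ((fun T : Finset X => ∑ q ∈ T, dist p q) '' {T | T ⊆ S.erase p ∧ T.card = c})

/-- `costS c S = min_{p ∈ S} costP c p S`. -/
noncomputable def costS {X : Type*} [MetricSpace X] [DecidableEq X]
    (c : ℕ) (S : Finset X) : ℝ :=
  sInf ((fun p => costP c p S) '' (S : Set X))

section Helpers

variable {X : Type*} [MetricSpace X] [DecidableEq X] {c : ℕ} {p : X} {S T : Finset X} {b : ℝ}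

lemma costP_set_finite (c : ℕ) (p : X) (S : Finset X) :
    ((fun T : Finset X => ∑ q ∈ T, dist p q) '' {T | T ⊆ S.erase p ∧ T.card = c}).Finite := by
  apply Set.Finite.image
  apply Set.Finite.subset (S.erase p).powerset.finite_toSet
  intro T hT
  exact Finset.mem_coe.mpr (Finset.mem_powerset.mpr hT.1)

lemma costP_set_nonneg :
    ∀ x ∈ ((fun T : Finset X => ∑ q ∈ T, dist p q) '' {T | T ⊆ S.erase p ∧ T.card = c}), 0 ≤ x := by
  rintro _ ⟨T, -, rfl⟩
  exact Finset.sum_nonneg fun q _ => dist_nonneg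

lemma costP_nonneg (c : ℕ) (p : X) (S : Finset X) : 0 ≤ costP c p S :=
  Real.sInf_nonneg costP_set_nonneg

lemma costP_le (hT : T ⊆ S.erase p) (hc : T.card = c) :
    costP c p S ≤ ∑ q ∈ T, dist p q :=
  csInf_le ⟨0, fun _ hx => costP_set_nonneg _ hx⟩ ⟨T, ⟨hT, hc⟩, rfl⟩

lemma exists_T_of_costP_lt (hcard : c ≤ (S.erase p).card) (h : costP c p S < b) :
    ∃ T, T ⊆ S.erase p ∧ T.card = c ∧ ∑ q ∈ T, dist p q < b := by
  obtain ⟨T0, hT0, hT0c⟩ := Finset.exists_subset_card_eq hcard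
  have hne : ((fun T : Finset X => ∑ q ∈ T, dist p q) '' {T | T ⊆ S.erase p ∧ T.card = c}).Nonempty :=
    ⟨_, ⟨T0, ⟨hT0, hT0c⟩, rfl⟩⟩
  obtain ⟨T, hT, hEq⟩ := hne.csInf_mem (costP_set_finite c p S)
  have h2 : ∑ q ∈ T, dist p q = costP c p S := hEq
  exact ⟨T, hT.1, hT.2, by rw [h2]; exact h⟩

lemma costS_nonneg (c : ℕ) (S : Finset X) : 0 ≤ costS c S := by
  apply Real.sInf_nonneg
  rintro _ ⟨q, -, rfl⟩
  exact costP_nonneg _ _ _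

lemma costS_le (hp : p ∈ S) : costS c S ≤ costP c p S :=
  csInf_le ⟨0, by rintro _ ⟨q, -, rfl⟩; exact costP_nonneg _ _ _⟩ ⟨p, by exact_mod_cast hp, rfl⟩

lemma exists_p_of_costS_lt (hS : S.Nonempty) (h : costS c S < b) :
    ∃ p ∈ S, costP c p S < b := by
  have hfin : ((fun p => costP c p S) '' (S : Set X)).Finite := S.finite_toSet.image _
  have hne : ((fun p => costP c p S) '' (S : Set X)).Nonempty :=
    (Finset.coe_nonempty.mpr hS).image _
  obtain ⟨q, hq, hEq⟩ := hne.csInf_mem hfin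
  have h2 : costP c q S = costS c S := hEq
  exact ⟨q, by exact_mod_cast hq, by rw [h2]; exact h⟩

lemma costP_anti (hTS : T ⊆ S) (hcard : c ≤ (T.erase p).card) :
    costP c p S ≤ costP c p T := by
  apply csInf_le_csInf ⟨0, fun _ hx => costP_set_nonneg _ hx⟩
  · obtain ⟨T0, hT0, hT0c⟩ := Finset.exists_subset_card_eq hcard
    exact ⟨_, ⟨T0, ⟨hT0, hT0c⟩, rfl⟩⟩
  · rintro _ ⟨U, ⟨hU1, hU2⟩, rfl⟩
    exact ⟨U, ⟨hU1.trans (Finset.erase_subset_erase _ hTS), hU2⟩, rfl⟩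

lemma costS_anti (hTS : T ⊆ S) (hcard : c + 1 ≤ T.card) :
    costS c S ≤ costS c T := by
  have hTne : T.Nonempty := Finset.card_pos.mp (by omega)
  apply le_csInf ((Finset.coe_nonempty.mpr hTne).image _)
  rintro _ ⟨q, hq, rfl⟩
  have hqT : q ∈ T := by exact_mod_cast hq
  calc costS c S ≤ costP c q S := costS_le (hTS hqT)
    _ ≤ costP c q T := costP_anti hTS (by rw [Finset.card_erase_of_mem hqT]; omega)

end Helpers

lemma exists_good {X : Type*} [MetricSpace X] [DecidableEq X] (c : ℕ) (hc : 1 ≤ c)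
    (Sstar A : Finset X) (hAcard : c + 1 ≤ A.card) (hAk : A.card < Sstar.card)
    (hA : costS c Sstar / (2 * (c : ℝ)) ≤ costS c A) :
    ∃ p ∈ Sstar, p ∉ A ∧ costS c Sstar / (2 * (c : ℝ)) ≤ costS c (insert p A) := by
  classical
  by_contra hcon
  push_neg at hcon
  set w := costS c Sstar with hw
  set r := w / (2 * (c : ℝ)) with hrdef
  have hc0 : (0:ℝ) < c := by exact_mod_cast hc
  have hw0 : 0 ≤ w := costS_nonneg c Sstar
  have hr0 : 0 ≤ r := div_nonneg hw0 (by positivity)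
  have hcr : (c : ℝ) * (2 * r) = w := by
    rw [hrdef]
    field_simp
  set B := Sstar \ A with hB
  -- every point of Sstar \ A is "bad": it has a set D of c points of A, all within < r
  have badD : ∀ p ∈ B, ∃ Dp : Finset X, Dp ⊆ A ∧ Dp.card = c ∧ ∀ q ∈ Dp, dist p q < r := by
    intro p hp
    rw [hB, Finset.mem_sdiff] at hp
    obtain ⟨hpS, hpA⟩ := hp
    have hlt : costS c (insert p A) < r := hcon p hpS hpA
    obtain ⟨v, hv, hvlt⟩ := exists_p_of_costS_lt (Finset.insert_nonempty p A) hlt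
    have hec : c ≤ ((insert p A).erase v).card := by
      rw [Finset.card_erase_of_mem hv, Finset.card_insert_of_notMem hpA]
      omega
    obtain ⟨T, hT, hTc, hTsum⟩ := exists_T_of_costP_lt hec hvlt
    rcases Finset.mem_insert.mp hv with rfl | hvA
    · refine ⟨T, ?_, hTc, fun q hq => ?_⟩
      · rwa [Finset.erase_insert hpA] at hT
      · exact lt_of_le_of_lt (Finset.single_le_sum (f := fun x => dist v x) (fun x _ => dist_nonneg) hq) hTsum
    · by_cases hpT : p ∈ T
      · set T' := T.erase p with hT'def
        have hvT : v ∉ T := fun hvT => (Finset.mem_erase.mp (hT hvT)).1 rfl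
        have hvT' : v ∉ T' := fun h => hvT (Finset.erase_subset _ _ h)
        have hT'A : T' ⊆ A := by
          intro x hx
          have hx1 := Finset.mem_erase.mp hx
          have hx2 := Finset.mem_erase.mp (hT hx1.2)
          rcases Finset.mem_insert.mp hx2.2 with h | h
          · exact absurd h hx1.1
          · exact h
        have hsum_split : dist v p + ∑ x ∈ T', dist v x = ∑ x ∈ T, dist v x :=
          Finset.add_sum_erase _ _ hpT
        refine ⟨insert v T', Finset.insert_subset hvA hT'A, ?_, ?_⟩
        · rw [Finset.card_insert_of_notMem hvT', hT'def, Finset.card_erase_of_mem hpT, hTc]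
          omega
        · intro q hq
          have hTnn : (0:ℝ) ≤ ∑ x ∈ T', dist v x := Finset.sum_nonneg fun x _ => dist_nonneg
          rcases Finset.mem_insert.mp hq with rfl | hqT'
          · have hvp : dist q p ≤ ∑ x ∈ T, dist q x :=
              Finset.single_le_sum (f := fun x => dist q x) (fun x _ => dist_nonneg) hpT
            rw [dist_comm]
            exact lt_of_le_of_lt hvp hTsum
          · have h1 : dist v q ≤ ∑ x ∈ T', dist v x :=
              Finset.single_le_sum (f := fun x => dist v x) (fun x _ => dist_nonneg) hqT'
            have h2 : dist p q ≤ dist p v + dist v q := dist_triangle p v q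
            have h3 : dist p v = dist v p := dist_comm p v
            have h4 : ∑ x ∈ T, dist v x < r := hTsum
            linarith
      · exfalso
        have hTA : T ⊆ A.erase v := by
          intro x hx
          have hx2 := Finset.mem_erase.mp (hT hx)
          rcases Finset.mem_insert.mp hx2.2 with h | h
          · exact absurd (h ▸ hx) hpT
          · exact Finset.mem_erase.mpr ⟨hx2.1, h⟩
        have h1 : costP c v A ≤ ∑ x ∈ T, dist v x := costP_le hTA hTc
        have h2 : costS c A ≤ costP c v A := costS_le hvA
        linarith
  choose! D hD1 hD2 hD3 using badD
  set G : X → Finset X := fun p => B.filter (fun p' => (D p ∩ D p').Nonempty) with hG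
  have hpG : ∀ p ∈ B, p ∈ G p := by
    intro p hp
    rw [hG]
    simp only [Finset.mem_filter]
    refine ⟨hp, ?_⟩
    rw [Finset.inter_self]
    exact Finset.card_pos.mp (by rw [hD2 p hp]; omega)
  have claim1 : ∀ p ∈ B, (D p ∩ Sstar).card + (G p).card ≤ c := by
    intro p hp
    by_contra hcc
    push_neg at hcc
    have hpS : p ∈ Sstar := (Finset.mem_sdiff.mp hp).1
    have hpA : p ∉ A := (Finset.mem_sdiff.mp hp).2
    have hdisj : Disjoint (D p ∩ Sstar) ((G p).erase p) := by
      rw [Finset.disjoint_left]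
      intro x hx1 hx2
      have hxA : x ∈ A := hD1 p hp (Finset.mem_inter.mp hx1).1
      have hxB : x ∈ B := (Finset.mem_filter.mp (Finset.mem_of_mem_erase hx2)).1
      exact (Finset.mem_sdiff.mp hxB).2 hxA
    have hscard : c ≤ ((D p ∩ Sstar) ∪ (G p).erase p).card := by
      rw [Finset.card_union_of_disjoint hdisj, Finset.card_erase_of_mem (hpG p hp)]
      have h1 : 1 ≤ (G p).card := Finset.card_pos.mpr ⟨p, hpG p hp⟩
      omega
    obtain ⟨U, hU, hUc⟩ := Finset.exists_subset_card_eq hscard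
    have hUS : U ⊆ Sstar.erase p := by
      intro u hu
      rcases Finset.mem_union.mp (hU hu) with h | h
      · refine Finset.mem_erase.mpr ⟨?_, (Finset.mem_inter.mp h).2⟩
        intro h'
        exact hpA (h' ▸ hD1 p hp (Finset.mem_inter.mp h).1)
      · have huB : u ∈ B := (Finset.mem_filter.mp (Finset.mem_of_mem_erase h)).1
        exact Finset.mem_erase.mpr ⟨(Finset.mem_erase.mp h).1, (Finset.mem_sdiff.mp huB).1⟩
    have hUlt : ∀ u ∈ U, dist p u < 2 * r := by
      intro u hu
      rcases Finset.mem_union.mp (hU hu) with h | h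
      · have := hD3 p hp u (Finset.mem_inter.mp h).1
        linarith
      · have huG := Finset.mem_of_mem_erase h
        have huB : u ∈ B := (Finset.mem_filter.mp huG).1
        obtain ⟨q, hq⟩ := (Finset.mem_filter.mp huG).2
        have hq1 : q ∈ D p := (Finset.mem_inter.mp hq).1
        have hq2 : q ∈ D u := (Finset.mem_inter.mp hq).2
        have e1 : dist p u ≤ dist p q + dist q u := dist_triangle p q u
        have e2 : dist q u = dist u q := dist_comm q u
        have e3 := hD3 p hp q hq1
        have e4 := hD3 u huB q hq2
        linarith
    have hUne : U.Nonempty := Finset.card_pos.mp (by omega)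
    have h1 : w ≤ costP c p Sstar := costS_le hpS
    have h2 : costP c p Sstar ≤ ∑ u ∈ U, dist p u := costP_le hUS hUc
    have h3 : ∑ u ∈ U, dist p u < ∑ u ∈ U, 2 * r := Finset.sum_lt_sum_of_nonempty hUne hUlt
    rw [Finset.sum_const, hUc, nsmul_eq_mul] at h3
    rw [hcr] at h3
    linarith
  set t : X → ℕ := fun y => (B.filter (fun p => y ∈ D p)).card with ht
  have ht_pos : ∀ p ∈ B, ∀ y ∈ D p, 1 ≤ t y := by
    intro p hp y hy
    exact Finset.card_pos.mpr ⟨p, Finset.mem_filter.mpr ⟨hp, hy⟩⟩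
  have ht_le : ∀ p ∈ B, ∀ y ∈ D p, t y ≤ (G p).card := by
    intro p hp y hy
    apply Finset.card_le_card
    intro p' hp'
    obtain ⟨hp'B, hyD'⟩ := Finset.mem_filter.mp hp'
    exact Finset.mem_filter.mpr ⟨hp'B, ⟨y, Finset.mem_inter.mpr ⟨hy, hyD'⟩⟩⟩
  have hDn : ∀ p ∈ B, (D p ∩ Sstar).card + (D p \ Sstar).card = c := by
    intro p hp
    rw [Finset.card_inter_add_card_sdiff, hD2 p hp]
  have hDn_pos : ∀ p ∈ B, 1 ≤ (D p \ Sstar).card := by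
    intro p hp
    have h1 := claim1 p hp
    have h2 : 1 ≤ (G p).card := Finset.card_pos.mpr ⟨p, hpG p hp⟩
    have h3 := hDn p hp
    omega
  have ht_le' : ∀ p ∈ B, ∀ y ∈ D p, t y ≤ (D p \ Sstar).card := by
    intro p hp y hy
    have h1 := ht_le p hp y hy
    have h2 := claim1 p hp
    have h3 := hDn p hp
    omega
  have hlow : ∀ p ∈ B, (1:ℝ) ≤ ∑ y ∈ D p \ Sstar, ((t y : ℝ))⁻¹ := by
    intro p hp
    have hcardpos : 0 < ((D p \ Sstar).card : ℝ) := by exact_mod_cast hDn_pos p hp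
    have hbound : ∀ y ∈ D p \ Sstar, (((D p \ Sstar).card : ℝ))⁻¹ ≤ ((t y : ℝ))⁻¹ := by
      intro y hy
      have hyD : y ∈ D p := (Finset.mem_sdiff.mp hy).1
      have h1 : 0 < (t y : ℝ) := by exact_mod_cast ht_pos p hp y hyD
      have h2 : (t y : ℝ) ≤ ((D p \ Sstar).card : ℝ) := by exact_mod_cast ht_le' p hp y hyD
      have := one_div_le_one_div_of_le h1 h2
      simpa [one_div] using this
    calc (1:ℝ) = ((D p \ Sstar).card : ℝ) * (((D p \ Sstar).card : ℝ))⁻¹ :=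
          (mul_inv_cancel₀ (ne_of_gt hcardpos)).symm
      _ = ∑ _y ∈ D p \ Sstar, (((D p \ Sstar).card : ℝ))⁻¹ := by
          rw [Finset.sum_const, nsmul_eq_mul]
      _ ≤ ∑ y ∈ D p \ Sstar, ((t y : ℝ))⁻¹ := Finset.sum_le_sum hbound
  have hsplit : ∀ p ∈ B, (D p \ Sstar) = (A \ Sstar).filter (fun y => y ∈ D p) := by
    intro p hp
    ext y
    simp only [Finset.mem_sdiff, Finset.mem_filter]
    constructor
    · rintro ⟨h1, h2⟩; exact ⟨⟨hD1 p hp h1, h2⟩, h1⟩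
    · rintro ⟨⟨_, h2⟩, h3⟩; exact ⟨h3, h2⟩
  have hup : ∑ p ∈ B, ∑ y ∈ D p \ Sstar, ((t y:ℝ))⁻¹ ≤ ((A \ Sstar).card : ℝ) := by
    have h1 : ∀ p ∈ B, ∑ y ∈ D p \ Sstar, ((t y:ℝ))⁻¹
        = ∑ y ∈ A \ Sstar, (if y ∈ D p then ((t y:ℝ))⁻¹ else 0) := by
      intro p hp
      rw [hsplit p hp, Finset.sum_filter]
    have h2 : ∀ y ∈ A \ Sstar, ∑ p ∈ B, (if y ∈ D p then ((t y:ℝ))⁻¹ else 0) ≤ 1 := by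
      intro y _
      have h3 : ∑ p ∈ B, (if y ∈ D p then ((t y:ℝ))⁻¹ else 0)
          = (t y : ℝ) * ((t y:ℝ))⁻¹ := by
        rw [← Finset.sum_filter, Finset.sum_const, nsmul_eq_mul]
      rw [h3]
      rcases eq_or_ne (t y) 0 with h0 | h0
      · simp [h0]
      · rw [mul_inv_cancel₀ (by exact_mod_cast h0)]
    calc ∑ p ∈ B, ∑ y ∈ D p \ Sstar, ((t y:ℝ))⁻¹
        = ∑ p ∈ B, ∑ y ∈ A \ Sstar, (if y ∈ D p then ((t y:ℝ))⁻¹ else 0) :=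
          Finset.sum_congr rfl h1
      _ = ∑ y ∈ A \ Sstar, ∑ p ∈ B, (if y ∈ D p then ((t y:ℝ))⁻¹ else 0) := Finset.sum_comm
      _ ≤ ∑ _y ∈ A \ Sstar, (1:ℝ) := Finset.sum_le_sum h2
      _ = ((A \ Sstar).card : ℝ) := by rw [Finset.sum_const, nsmul_eq_mul, mul_one]
  have hfinal : (B.card : ℝ) ≤ ((A \ Sstar).card : ℝ) := by
    calc (B.card : ℝ) = ∑ _p ∈ B, (1:ℝ) := by rw [Finset.sum_const, nsmul_eq_mul, mul_one]
      _ ≤ ∑ p ∈ B, ∑ y ∈ D p \ Sstar, ((t y:ℝ))⁻¹ := Finset.sum_le_sum hlow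
      _ ≤ _ := hup
  have hBA : B.card ≤ (A \ Sstar).card := by exact_mod_cast hfinal
  have e1 : (Sstar \ A).card + (Sstar ∩ A).card = Sstar.card := Finset.card_sdiff_add_card_inter _ _
  have e2 : (A \ Sstar).card + (A ∩ Sstar).card = A.card := Finset.card_sdiff_add_card_inter _ _
  have e3 : (Sstar ∩ A).card = (A ∩ Sstar).card := by rw [Finset.inter_comm]
  rw [hB] at hBA
  omega

theorem stmt7 {X : Type*} [MetricSpace X] [DecidableEq X] (c k : ℕ) (hc : 1 ≤ c)
    (P Sstar : Finset X) (hk1 : c + 1 ≤ k) (hk2 : k ≤ P.card)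
    (hSP : Sstar ⊆ P) (hScard : Sstar.card = k)
    (hopt : ∀ S ⊆ P, S.card = k → costS c S ≤ costS c Sstar)
    (S : ℕ → Finset X)
    (hbase : S (c + 1) ⊆ P ∧ (S (c + 1)).card = c + 1 ∧
      ∀ T ⊆ P, T.card = c + 1 → costS c T ≤ costS c (S (c + 1)))
    (hstep : ∀ j, c + 2 ≤ j → j ≤ k → ∃ p ∈ P, p ∉ S (j - 1) ∧
      S j = insert p (S (j - 1)) ∧
      ∀ q ∈ P, q ∉ S (j - 1) → costS c (insert q (S (j - 1))) ≤ costS c (S j)) :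
    ∀ i, c + 1 ≤ i → i ≤ k → costS c Sstar / (2 * c) ≤ costS c (S i) := by
  classical
  have hw0 : 0 ≤ costS c Sstar := costS_nonneg c Sstar
  have hrw : costS c Sstar / (2 * (c : ℝ)) ≤ costS c Sstar := by
    apply div_le_self hw0
    have h1 : (1:ℝ) ≤ (c:ℝ) := by exact_mod_cast hc
    linarith
  suffices H : ∀ i, c + 1 ≤ i → (i ≤ k →
      (S i ⊆ P ∧ (S i).card = i ∧ costS c Sstar / (2 * (c : ℝ)) ≤ costS c (S i))) by
    intro i h1 h2
    exact (H i h1 h2).2.2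
  intro i hi
  induction i, hi using Nat.le_induction with
  | base =>
    intro _
    obtain ⟨hb1, hb2, hb3⟩ := hbase
    refine ⟨hb1, hb2, ?_⟩
    obtain ⟨T, hT, hTc⟩ := Finset.exists_subset_card_eq (show c + 1 ≤ Sstar.card by omega)
    have h1 : costS c Sstar ≤ costS c T := costS_anti hT (by omega)
    have h2 : costS c T ≤ costS c (S (c+1)) := hb3 T (hT.trans hSP) hTc
    linarith
  | succ i hi IH =>
    intro hik
    obtain ⟨h1, h2, h3⟩ := IH (by omega)
    obtain ⟨p0, hp0P, hp0n, hSeq, hmax⟩ := hstep (i+1) (by omega) hik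
    simp only [Nat.add_sub_cancel] at hp0n hSeq hmax
    obtain ⟨p, hpS, hpA, hpcost⟩ :=
      exists_good c hc Sstar (S i) (by omega) (by omega) h3
    refine ⟨?_, ?_, ?_⟩
    · rw [hSeq]
      exact Finset.insert_subset hp0P h1
    · rw [hSeq, Finset.card_insert_of_notMem hp0n, h2]
    · calc costS c Sstar / (2 * (c : ℝ)) ≤ costS c (insert p (S i)) := hpcost
        _ ≤ costS c (S (i+1)) := hmax p (hSP hpS) hpA
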